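/- Let R > 0, let f : ℝ³ → ℝ be twice continuously differentiable and g : ℝ³ → ℝ be continuously differentiable, both supported in the closed ball B_R(0). Define A(τ,x) := ∂_τ(τ·M_f(τ,x)) + τ·M_g(τ,x) for τ > 0. Then there is a constant C > 0 such that for all t ≥ 1 and all x ∈ ℝ³, |A((3t)^{1/3}, x)| ≤ C·t^{−1/3}; that is, in the original FRW time variable t = τ³/3 the solution decays at the rate O(t^{−1/3}). -/

import Mathlib

/-!
For `τ > 0` the rescaling `y = x + τ ω` gives `τ M_f(τ,x) = (τ / 4π) ∫_{S²} f(x + τ ω) dω`, so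
`A(τ,x) = M_f(τ,x) + τ · (1/4π) ∫_{S²} ∂_r f(x + τ ω) dω + τ M_g(τ,x)`. All three are averages over
`S_τ(x)` of functions that vanish off `B_R(0)`, and the area of `S_τ(x) ∩ B_R(0)` is `O(R²)`
uniformly in `τ` and `x`: the sphere is covered by the caps on which one coordinate dominates, and
each cap is a Lipschitz graph over a coordinate plane, where its intersection with `B_R(0)` projects
into a disc of radius `R`. Dividing by the area `4πτ²` gives `|A(τ,x)| ≤ C/τ` for `τ ≥ 1`, and
`τ = (3t)^{1/3} ≥ t^{1/3}`.
-/

open MeasureTheory Metric Real Filter Topology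

/-- The spherical mean `M_f(r,x) = (1/(4π r²)) ∫_{S_r(x)} f dS` (surface measure = 2-dimensional
Hausdorff measure), extended by `M_f(0,x) := f(x)`. -/
noncomputable def sphericalMean (f : EuclideanSpace ℝ (Fin 3) → ℝ) (r : ℝ)
    (x : EuclideanSpace ℝ (Fin 3)) : ℝ :=
  if r = 0 then f x
  else (1 / (4 * π * r ^ 2)) * ∫ y in sphere x r, f y ∂(μH[2])

open scoped ENNReal NNReal Pointwise

theorem hausdorffMeasure_le_mul_image_of_dist_le {X Y : Type*} [MetricSpace X] [MeasurableSpace X]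
    [BorelSpace X] [MetricSpace Y] [MeasurableSpace Y] [BorelSpace Y] {f : X → Y} {s : Set X}
    {K : ℝ≥0} {d : ℝ} (hd : 0 ≤ d) (hf : ∀ a ∈ s, ∀ b ∈ s, dist a b ≤ K * dist (f a) (f b)) :
    μH[d] s ≤ (K : ℝ≥0∞) ^ d * μH[d] (f '' s) := by
  have hanti : AntilipschitzWith K (s.domRestrict f) :=
    AntilipschitzWith.of_le_mul_dist fun a b => hf a a.2 b b.2
  have h := hanti.le_hausdorffMeasure_image hd Set.univ
  rwa [Set.image_univ, Set.range_domRestrict,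
    ← isometry_subtype_coe.hausdorffMeasure_image (Or.inl hd), Set.image_univ,
    Subtype.range_coe] at h

section NormedSpace

variable {G : Type*} [NormedAddCommGroup G] [NormedSpace ℝ G]

theorem norm_setIntegral_le_of_eq_zero_off {X : Type*} [MeasurableSpace X] {μ : Measure X}
    {s t : Set X} {h : X → G} {M : ℝ} (hs : MeasurableSet s) (hst : μ (s ∩ t) < ∞)
    (hM : ∀ y ∈ s, ‖h y‖ ≤ M) (ht : ∀ y ∉ t, h y = 0) :
    ‖∫ y in s, h y ∂μ‖ ≤ M * μ.real (s ∩ t) := by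
  rw [setIntegral_eq_of_subset_of_ae_sdiff_eq_zero hs.nullMeasurableSet Set.inter_subset_left
    (ae_of_all _ fun y hy => ht y fun hyt => hy.2 ⟨hy.1, hyt⟩)]
  exact norm_setIntegral_le_of_norm_le_const hst fun y hy => hM y hy.1

variable {E : Type*} [NormedAddCommGroup E] [NormedSpace ℝ E] [MeasurableSpace E] [BorelSpace E]

theorem map_add_smul_hausdorffMeasure (d : ℕ) (x : E) {τ : ℝ} (hτ : τ ≠ 0) :
    Measure.map (fun ω => x + τ • ω) (μH[d] : Measure E) = (‖τ‖₊⁻¹ ^ d : ℝ≥0) • μH[d] := by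
  have hhom : (AffineMap.homothety (0 : E) τ : E → E) = (τ • ·) := by
    ext ω; simp [AffineMap.homothety_apply]
  rw [show (fun ω => x + τ • ω) = (IsometryEquiv.addLeft x) ∘ (τ • ·) from rfl,
    ← Measure.map_map (IsometryEquiv.addLeft x).continuous.measurable
      (continuous_const_smul τ).measurable, ← hhom,
    map_homothety_hausdorffMeasure (Nat.cast_nonneg d) (0 : E) hτ, Measure.map_smul,
    IsometryEquiv.map_hausdorffMeasure, NNReal.rpow_natCast]

theorem setIntegral_sphere_eq_pow_mul (d : ℕ) (F : E → G) (x : E) {τ : ℝ} (hτ : 0 < τ) :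
    ∫ y in sphere x τ, F y ∂μH[d] = τ ^ d • ∫ ω in sphere 0 1, F (x + τ • ω) ∂μH[d] := by
  have hemb : MeasurableEmbedding (fun ω : E => x + τ • ω) :=
    ((Homeomorph.smulOfNeZero τ hτ.ne').trans (Homeomorph.addLeft x)).measurableEmbedding
  have hpre : (fun ω : E => x + τ • ω) ⁻¹' sphere x τ = sphere 0 1 := by
    ext ω
    simp [norm_smul, abs_of_pos hτ, hτ.ne']
  rw [← hpre, ← hemb.setIntegral_map, map_add_smul_hausdorffMeasure d x hτ.ne',
    Measure.restrict_smul, integral_smul_nnreal_measure, NNReal.smul_def, smul_smul]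
  have : τ ^ d * ((‖τ‖₊⁻¹ ^ d : ℝ≥0) : ℝ) = 1 := by
    rw [NNReal.coe_pow, NNReal.coe_inv, coe_nnnorm, norm_of_nonneg hτ.le, inv_pow,
      mul_inv_cancel₀ (by positivity)]
  rw [this, one_smul]

theorem hasDerivAt_integral_comp_add_smul [SecondCountableTopology E] {μ : Measure E}
    [IsFiniteMeasure μ] (hμ : ∀ᵐ ω ∂μ, ‖ω‖ ≤ 1) {f : E → G} (hf : ContDiff ℝ 1 f)
    (hfc : HasCompactSupport f) (x : E) (τ : ℝ) :
    HasDerivAt (fun s => ∫ ω, f (x + s • ω) ∂μ) (∫ ω, fderiv ℝ f (x + τ • ω) ω ∂μ) τ := by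
  have hf' : Continuous (fderiv ℝ f) := hf.continuous_fderiv one_ne_zero
  obtain ⟨M, hM⟩ := hfc.exists_bound_of_continuous hf.continuous
  obtain ⟨L, hL⟩ := (hfc.fderiv ℝ).exists_bound_of_continuous hf'
  have hline (s : ℝ) : Continuous fun ω : E => x + s • ω := by fun_prop
  refine (hasDerivAt_integral_of_dominated_loc_of_deriv_le (x₀ := τ) (bound := fun _ => L)
    (F' := fun s ω => fderiv ℝ f (x + s • ω) ω) univ_mem
    (Eventually.of_forall fun s => (hf.continuous.comp (hline s)).aestronglyMeasurable)
    ((integrable_const M).mono' (hf.continuous.comp (hline τ)).aestronglyMeasurable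
      (ae_of_all _ fun ω => hM _))
    ((hf'.comp (hline τ)).clm_apply continuous_id).aestronglyMeasurable ?_ (integrable_const L)
    (ae_of_all _ fun ω s _ => ?_)).2
  · filter_upwards [hμ] with ω hω s _
    calc ‖fderiv ℝ f (x + s • ω) ω‖ ≤ ‖fderiv ℝ f (x + s • ω)‖ * ‖ω‖ := (fderiv ℝ f _).le_opNorm ω
      _ ≤ L := by nlinarith [hL (x + s • ω), norm_nonneg (fderiv ℝ f (x + s • ω))]
  · have hpath : HasDerivAt (fun s : ℝ => x + s • ω) ω s := by
      simpa using ((hasDerivAt_id s).smul_const ω).const_add x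
    exact ((hf.differentiable one_ne_zero _).hasFDerivAt).comp_hasDerivAt s hpath

end NormedSpace

section EuclideanSpace

variable {n : ℕ}

instance isAddHaarMeasure_hausdorffMeasure_euclideanSpace :
    (μH[n] : Measure (EuclideanSpace ℝ (Fin n))).IsAddHaarMeasure := by
  simpa using isAddHaarMeasure_hausdorffMeasure (E := EuclideanSpace ℝ (Fin n))

theorem hausdorffMeasure_closedBall_le (p : EuclideanSpace ℝ (Fin n)) (r : ℝ) :
    μH[n] (closedBall p r) ≤
      ENNReal.ofReal (r ^ n) * μH[n] (closedBall (0 : EuclideanSpace ℝ (Fin n)) 1) := by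
  rcases lt_or_ge r 0 with hr | hr
  · simp [closedBall_eq_empty.2 hr]
  simpa using (Measure.addHaar_closedBall' (μH[n] : Measure (EuclideanSpace ℝ (Fin n))) p hr).le

noncomputable def dropCoord (i : Fin (n + 1)) (y : EuclideanSpace ℝ (Fin (n + 1))) :
    EuclideanSpace ℝ (Fin n) :=
  WithLp.toLp 2 (Fin.removeNth i y.ofLp)

@[simp]
theorem dropCoord_zero (i : Fin (n + 1)) : dropCoord i 0 = 0 := rfl

theorem dist_sq_eq_add_dist_dropCoord_sq (i : Fin (n + 1))
    (y z : EuclideanSpace ℝ (Fin (n + 1))) :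
    dist y z ^ 2 = (y i - z i) ^ 2 + dist (dropCoord i y) (dropCoord i z) ^ 2 := by
  rw [EuclideanSpace.dist_eq, EuclideanSpace.dist_eq, sq_sqrt (by positivity),
    sq_sqrt (by positivity), Fin.sum_univ_succAbove _ i]
  simp only [Real.dist_eq, sq_abs]
  rfl

theorem norm_sq_eq_add_norm_dropCoord_sq (i : Fin (n + 1))
    (y : EuclideanSpace ℝ (Fin (n + 1))) :
    ‖y‖ ^ 2 = y i ^ 2 + ‖dropCoord i y‖ ^ 2 := by
  simpa using dist_sq_eq_add_dist_dropCoord_sq i y 0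

theorem dist_dropCoord_le (i : Fin (n + 1)) (y z : EuclideanSpace ℝ (Fin (n + 1))) :
    dist (dropCoord i y) (dropCoord i z) ≤ dist y z :=
  (pow_le_pow_iff_left₀ dist_nonneg dist_nonneg two_ne_zero).1 <| by
    rw [dist_sq_eq_add_dist_dropCoord_sq i]
    exact le_add_of_nonneg_left (sq_nonneg _)

theorem dist_le_mul_dist_dropCoord (i : Fin (n + 1)) {τ : ℝ} (hτ : 0 < τ)
    {y z : EuclideanSpace ℝ (Fin (n + 1))} (hy : ‖y‖ = τ) (hz : ‖z‖ = τ)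
    (hyi : τ ^ 2 ≤ (n + 1) * y i ^ 2) (hzi : τ ^ 2 ≤ (n + 1) * z i ^ 2) (hyz : 0 ≤ y i * z i) :
    dist y z ≤ (n + 2) * dist (dropCoord i y) (dropCoord i z) := by
  set δ := dist (dropCoord i y) (dropCoord i z)
  set u := ‖dropCoord i y‖
  set v := ‖dropCoord i z‖
  have hu : y i ^ 2 + u ^ 2 = τ ^ 2 := by rw [← hy, norm_sq_eq_add_norm_dropCoord_sq i]
  have hv : z i ^ 2 + v ^ 2 = τ ^ 2 := by rw [← hz, norm_sq_eq_add_norm_dropCoord_sq i]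
  have huv : (u - v) ^ 2 ≤ δ ^ 2 := by
    rw [← sq_abs]
    exact pow_le_pow_left₀ (abs_nonneg _)
      ((abs_norm_sub_norm_le _ _).trans_eq (dist_eq_norm _ _).symm) 2
  have hsum : (u + v) ^ 2 ≤ (2 * τ) ^ 2 := by
    have hu' : u ≤ τ := (pow_le_pow_iff_left₀ (norm_nonneg _) hτ.le two_ne_zero).1 (by nlinarith)
    have hv' : v ≤ τ := (pow_le_pow_iff_left₀ (norm_nonneg _) hτ.le two_ne_zero).1 (by nlinarith)
    exact pow_le_pow_left₀ (by positivity) (by linarith) 2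
  -- `y i ^ 2 - z i ^ 2 = v ^ 2 - u ^ 2`, and on a cap `y i + z i` stays away from `0`
  have hprod : τ ^ 2 ≤ (n + 1) * (y i * z i) := by
    have : (τ ^ 2) ^ 2 ≤ ((n + 1) * (y i * z i)) ^ 2 := by nlinarith
    exact (pow_le_pow_iff_left₀ (by positivity) (by positivity) two_ne_zero).1 this
  have hfactor : (y i - z i) ^ 2 * (y i + z i) ^ 2 = (u - v) ^ 2 * (u + v) ^ 2 := by
    have : y i ^ 2 - z i ^ 2 = v ^ 2 - u ^ 2 := by linarith
    linear_combination (y i ^ 2 - z i ^ 2 + (v ^ 2 - u ^ 2)) * this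
  have hcoord : (y i - z i) ^ 2 ≤ (n + 1) * δ ^ 2 := by
    have h4 : 4 * τ ^ 2 * (y i - z i) ^ 2 ≤ 4 * τ ^ 2 * ((n + 1) * δ ^ 2) := by
      have : 4 * τ ^ 2 ≤ (n + 1) * (y i + z i) ^ 2 := by nlinarith [sq_nonneg (y i - z i)]
      nlinarith [mul_le_mul huv hsum (sq_nonneg _) (sq_nonneg _), sq_nonneg (y i - z i)]
    exact le_of_mul_le_mul_left h4 (by positivity)
  have hδ : 0 ≤ δ := dist_nonneg
  refine (pow_le_pow_iff_left₀ dist_nonneg (by positivity) two_ne_zero).1 ?_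
  rw [dist_sq_eq_add_dist_dropCoord_sq i]
  nlinarith

def sphereCap (τ : ℝ) (i : Fin (n + 1)) (b : Bool) : Set (EuclideanSpace ℝ (Fin (n + 1))) :=
  {y | ‖y‖ = τ ∧ τ ^ 2 ≤ (n + 1) * y i ^ 2 ∧ (0 ≤ y i ↔ b)}

theorem sphere_subset_iUnion_sphereCap (τ : ℝ) :
    sphere (0 : EuclideanSpace ℝ (Fin (n + 1))) τ ⊆
      ⋃ p : Fin (n + 1) × Bool, sphereCap τ p.1 p.2 := by
  intro y hy
  rw [mem_sphere_zero_iff_norm] at hy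
  obtain ⟨i, -, hi⟩ : ∃ i ∈ Finset.univ, τ ^ 2 / (n + 1) ≤ y i ^ 2 := by
    refine Finset.exists_le_of_sum_le Finset.univ_nonempty ?_
    rw [Finset.sum_const, Finset.card_univ, Fintype.card_fin, nsmul_eq_mul]
    have := EuclideanSpace.norm_sq_eq y
    simp only [Real.norm_eq_abs, sq_abs] at this
    rw [← this, hy]
    push_cast
    rw [mul_div_cancel₀ _ (by positivity)]
  refine Set.mem_iUnion.2 ⟨(i, decide (0 ≤ y i)), hy, ?_, by simp⟩
  rwa [div_le_iff₀' (by positivity)] at hi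

theorem hausdorffMeasure_sphereCap_inter_closedBall_le {τ : ℝ} (hτ : 0 < τ)
    (i : Fin (n + 1)) (b : Bool) (c : EuclideanSpace ℝ (Fin (n + 1))) (r : ℝ) :
    μH[n] (sphereCap τ i b ∩ closedBall c r) ≤ (n + 2) ^ n * ENNReal.ofReal (r ^ n) *
      μH[n] (closedBall (0 : EuclideanSpace ℝ (Fin n)) 1) := by
  have hanti : ∀ y ∈ sphereCap τ i b ∩ closedBall c r, ∀ z ∈ sphereCap τ i b ∩ closedBall c r,
      dist y z ≤ ((n + 2 : ℝ≥0) : ℝ) * dist (dropCoord i y) (dropCoord i z) := by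
    rintro y ⟨⟨hy, hyi, hyb⟩, -⟩ z ⟨⟨hz, hzi, hzb⟩, -⟩
    have hsign : 0 ≤ y i * z i := by
      cases b <;> simp only [Bool.false_eq_true, iff_false, iff_true, not_le] at hyb hzb <;>
        nlinarith
    push_cast
    exact dist_le_mul_dist_dropCoord i hτ hy hz hyi hzi hsign
  have himage :
      dropCoord i '' (sphereCap τ i b ∩ closedBall c r) ⊆ closedBall (dropCoord i c) r := by
    rintro _ ⟨y, ⟨-, hy⟩, rfl⟩
    exact (dist_dropCoord_le i y c).trans hy
  calc μH[n] (sphereCap τ i b ∩ closedBall c r)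
      ≤ ((n + 2 : ℝ≥0) : ℝ≥0∞) ^ (n : ℝ) *
          μH[n] (dropCoord i '' (sphereCap τ i b ∩ closedBall c r)) :=
        hausdorffMeasure_le_mul_image_of_dist_le (Nat.cast_nonneg n) hanti
    _ ≤ (n + 2) ^ n *
          (ENNReal.ofReal (r ^ n) * μH[n] (closedBall (0 : EuclideanSpace ℝ (Fin n)) 1)) := by
        rw [ENNReal.rpow_natCast]
        push_cast
        gcongr
        exact (measure_mono himage).trans (hausdorffMeasure_closedBall_le _ r)
    _ = _ := by ring

theorem hausdorffMeasure_sphere_inter_closedBall_le (x c : EuclideanSpace ℝ (Fin (n + 1)))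
    {τ : ℝ} (hτ : 0 < τ) (r : ℝ) :
    μH[n] (sphere x τ ∩ closedBall c r) ≤ 2 * (n + 1) * (n + 2) ^ n * ENNReal.ofReal (r ^ n) *
      μH[n] (closedBall (0 : EuclideanSpace ℝ (Fin n)) 1) := by
  have htranslate : sphere x τ ∩ closedBall c r = x +ᵥ (sphere 0 τ ∩ closedBall (c - x) r) := by
    rw [Set.vadd_set_inter, vadd_sphere, vadd_closedBall, vadd_eq_add, vadd_eq_add, add_zero,
      add_sub_cancel]
  rw [htranslate, hausdorffMeasure_vadd _ (Or.inl (Nat.cast_nonneg n))]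
  have hcover : sphere 0 τ ∩ closedBall (c - x) r ⊆
      ⋃ p : Fin (n + 1) × Bool, sphereCap τ p.1 p.2 ∩ closedBall (c - x) r := by
    rw [← Set.iUnion_inter]
    exact Set.inter_subset_inter_left _ (sphere_subset_iUnion_sphereCap τ)
  calc μH[n] (sphere 0 τ ∩ closedBall (c - x) r)
      ≤ ∑ p : Fin (n + 1) × Bool, μH[n] (sphereCap τ p.1 p.2 ∩ closedBall (c - x) r) :=
        (measure_mono hcover).trans (measure_iUnion_fintype_le _ _)
    _ ≤ ∑ _p : Fin (n + 1) × Bool, (n + 2) ^ n * ENNReal.ofReal (r ^ n) *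
          μH[n] (closedBall (0 : EuclideanSpace ℝ (Fin n)) 1) :=
        Finset.sum_le_sum fun p _ => hausdorffMeasure_sphereCap_inter_closedBall_le hτ p.1 p.2 _ r
    _ = _ := by
        rw [Finset.sum_const, Finset.card_univ, Fintype.card_prod, Fintype.card_fin,
          Fintype.card_bool, nsmul_eq_mul]
        push_cast
        ring

theorem hausdorffMeasure_sphere_lt_top (x : EuclideanSpace ℝ (Fin (n + 1))) {τ : ℝ}
    (hτ : 0 < τ) : μH[n] (sphere x τ) < ∞ := by
  rw [← Set.inter_eq_left.2 sphere_subset_closedBall]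
  refine (hausdorffMeasure_sphere_inter_closedBall_le x x hτ τ).trans_lt ?_
  have := measure_closedBall_lt_top (μ := (μH[n] : Measure (EuclideanSpace ℝ (Fin n))))
    (x := 0) (r := 1)
  finiteness

end EuclideanSpace

local notation "ℝ³" => EuclideanSpace ℝ (Fin 3)

-- `96 = 2 · 3 · 4²`: six caps, each at most `4²` times the area of a disc of radius `R`
noncomputable def sphereBallAreaBound (R : ℝ) : ℝ :=
  96 * R ^ 2 * (μH[2] : Measure (EuclideanSpace ℝ (Fin 2))).real (closedBall 0 1)

theorem measureReal_sphere_inter_closedBall_le (x c : ℝ³) {τ : ℝ} (hτ : 0 < τ) (r : ℝ) :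
    (μH[2] : Measure ℝ³).real (sphere x τ ∩ closedBall c r) ≤ sphereBallAreaBound r := by
  have h := hausdorffMeasure_sphere_inter_closedBall_le (n := 2) x c hτ r
  norm_num at h
  have hball : μH[2] (closedBall (0 : EuclideanSpace ℝ (Fin 2)) 1) ≠ ∞ := by
    simpa using (measure_closedBall_lt_top
      (μ := (μH[(2 : ℕ)] : Measure (EuclideanSpace ℝ (Fin 2)))) (x := 0) (r := 1)).ne
  rw [sphereBallAreaBound, measureReal_def, measureReal_def,
    ← ENNReal.toReal_ofReal (by positivity : 0 ≤ 96 * r ^ 2), ← ENNReal.toReal_mul]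
  refine ENNReal.toReal_mono (by finiteness) (h.trans_eq ?_)
  rw [ENNReal.ofReal_mul (by norm_num)]
  norm_num

theorem abs_setIntegral_sphere_le {h : ℝ³ → ℝ} {x : ℝ³} {τ R M : ℝ} (hτ : 0 < τ)
    (hM : ∀ y ∈ sphere x τ, |h y| ≤ M) (hR : ∀ y ∉ closedBall 0 R, h y = 0) :
    |∫ y in sphere x τ, h y ∂μH[2]| ≤ M * sphereBallAreaBound R := by
  have hM0 : 0 ≤ M := (abs_nonneg _).trans (hM _ (NormedSpace.sphere_nonempty.2 hτ.le).some_mem)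
  have hfin : μH[2] (sphere x τ ∩ closedBall 0 R) < ∞ :=
    (measure_mono Set.inter_subset_left).trans_lt
      (by simpa using hausdorffMeasure_sphere_lt_top (n := 2) x hτ)
  calc |∫ y in sphere x τ, h y ∂μH[2]|
      ≤ M * (μH[2] : Measure ℝ³).real (sphere x τ ∩ closedBall 0 R) :=
        norm_setIntegral_le_of_eq_zero_off isClosed_sphere.measurableSet hfin hM hR
    _ ≤ M * sphereBallAreaBound R := by
        gcongr; exact measureReal_sphere_inter_closedBall_le x 0 hτ R

theorem abs_integral_unitSphere_le {h : ℝ³ → ℝ} {x : ℝ³} {τ R M : ℝ} (hτ : 0 < τ)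
    (hM : ∀ y ∈ sphere x τ, |h y| ≤ M) (hR : ∀ y ∉ closedBall 0 R, h y = 0) :
    |∫ ω in sphere 0 1, h (x + τ • ω) ∂μH[2]| ≤ M * sphereBallAreaBound R / τ ^ 2 := by
  have hres := setIntegral_sphere_eq_pow_mul 2 h x hτ
  rw [Nat.cast_ofNat] at hres
  have hbound := abs_setIntegral_sphere_le hτ hM hR
  rw [hres, smul_eq_mul, abs_mul, abs_of_pos (by positivity)] at hbound
  rw [le_div_iff₀ (by positivity), mul_comm]
  simpa using hbound

theorem abs_integral_fderiv_unitSphere_le {f : ℝ³ → ℝ} {R L : ℝ}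
    (hfsupp : tsupport f ⊆ closedBall 0 R) (hL : ∀ y, ‖fderiv ℝ f y‖ ≤ L) (x : ℝ³) {τ : ℝ}
    (hτ : 0 < τ) :
    |∫ ω in sphere 0 1, fderiv ℝ f (x + τ • ω) ω ∂μH[2]| ≤ L * sphereBallAreaBound R / τ ^ 2 := by
  set Df : ℝ³ → ℝ := fun y => fderiv ℝ f y (τ⁻¹ • (y - x))
  have hDf_bound : ∀ y ∈ sphere x τ, |Df y| ≤ L := fun y hy => by
    have hunit : ‖τ⁻¹ • (y - x)‖ = 1 := by
      rw [norm_smul, ← dist_eq_norm, mem_sphere.1 hy, norm_inv, norm_of_nonneg hτ.le,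
        inv_mul_cancel₀ hτ.ne']
    calc |Df y| ≤ ‖fderiv ℝ f y‖ * ‖τ⁻¹ • (y - x)‖ := (fderiv ℝ f y).le_opNorm _
      _ ≤ L := by rw [hunit, mul_one]; exact hL y
  have hDf_zero : ∀ y ∉ closedBall 0 R, Df y = 0 := fun y hy => by
    simp [Df, image_eq_zero_of_notMem_tsupport fun h => hy (hfsupp (tsupport_fderiv_subset ℝ h))]
  have hDf : ∀ ω : ℝ³, Df (x + τ • ω) = fderiv ℝ f (x + τ • ω) ω := fun ω => by
    simp [Df, hτ.ne']
  simpa only [hDf] using abs_integral_unitSphere_le hτ hDf_bound hDf_zero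

theorem sphericalMean_eq_integral_unitSphere (f : ℝ³ → ℝ) (x : ℝ³) {τ : ℝ} (hτ : 0 < τ) :
    sphericalMean f τ x = (4 * π)⁻¹ * ∫ ω in sphere 0 1, f (x + τ • ω) ∂μH[2] := by
  have h := setIntegral_sphere_eq_pow_mul 2 f x hτ
  rw [Nat.cast_ofNat] at h
  rw [sphericalMean, if_neg hτ.ne', h, smul_eq_mul]
  field_simp

theorem abs_sphericalMean_le {h : ℝ³ → ℝ} {x : ℝ³} {τ R M : ℝ} (hτ : 0 < τ)
    (hM : ∀ y ∈ sphere x τ, |h y| ≤ M) (hR : ∀ y ∉ closedBall 0 R, h y = 0) :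
    |sphericalMean h τ x| ≤ M * sphereBallAreaBound R / (4 * π * τ ^ 2) := by
  rw [sphericalMean_eq_integral_unitSphere h x hτ, abs_mul, abs_inv, abs_of_pos (by positivity),
    ← div_eq_inv_mul, div_le_div_iff₀ (by positivity) (by positivity)]
  have := abs_integral_unitSphere_le hτ hM hR
  rw [le_div_iff₀ (by positivity)] at this
  nlinarith [Real.pi_pos]

theorem hasDerivAt_mul_sphericalMean {f : ℝ³ → ℝ} (hf : ContDiff ℝ 1 f) (hfc : HasCompactSupport f)
    (x : ℝ³) {τ : ℝ} (hτ : 0 < τ) :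
    HasDerivAt (fun s => s * sphericalMean f s x) (sphericalMean f τ x +
      τ * ((4 * π)⁻¹ * ∫ ω in sphere 0 1, fderiv ℝ f (x + τ • ω) ω ∂μH[2])) τ := by
  have : IsFiniteMeasure ((μH[2] : Measure ℝ³).restrict (sphere 0 1)) :=
    isFiniteMeasure_restrict.2
      (by simpa using (hausdorffMeasure_sphere_lt_top (n := 2) 0 one_pos).ne)
  have hφ := hasDerivAt_integral_comp_add_smul (μ := (μH[2] : Measure ℝ³).restrict (sphere 0 1))
    (ae_restrict_of_forall_mem isClosed_sphere.measurableSet fun ω hω =>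
      (mem_sphere_zero_iff_norm.1 hω).le) hf hfc x τ
  have hev : (fun s => s * sphericalMean f s x) =ᶠ[𝓝 τ]
      fun s => s * ((4 * π)⁻¹ * ∫ ω in sphere 0 1, f (x + s • ω) ∂μH[2]) := by
    filter_upwards [lt_mem_nhds hτ] with s hs
    rw [sphericalMean_eq_integral_unitSphere f x hs]
  rw [sphericalMean_eq_integral_unitSphere f x hτ]
  simpa using ((hasDerivAt_id τ).mul (hφ.const_mul (4 * π)⁻¹)).congr_of_eventuallyEq hev

theorem abs_kirchhoff_le {f g : ℝ³ → ℝ} {R Mf L Mg : ℝ} (hf : ContDiff ℝ 1 f)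
    (hfsupp : tsupport f ⊆ closedBall 0 R) (hgsupp : tsupport g ⊆ closedBall 0 R)
    (hMf : ∀ y, |f y| ≤ Mf) (hL : ∀ y, ‖fderiv ℝ f y‖ ≤ L) (hMg : ∀ y, |g y| ≤ Mg)
    (x : ℝ³) {τ : ℝ} (hτ : 1 ≤ τ) :
    |deriv (fun s => s * sphericalMean f s x) τ + τ * sphericalMean g τ x| ≤
      (Mf + L + Mg) * sphereBallAreaBound R / (4 * π * τ) := by
  have hτ0 : 0 < τ := by linarith
  set K := sphereBallAreaBound R
  have hK : 0 ≤ K := by unfold K sphereBallAreaBound; positivity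
  have hMf0 : 0 ≤ Mf := (abs_nonneg _).trans (hMf 0)
  have hfc : HasCompactSupport f :=
    (isCompact_closedBall 0 R).of_isClosed_subset (isClosed_tsupport f) hfsupp
  have h1 : |sphericalMean f τ x| ≤ Mf * K / (4 * π * τ ^ 2) :=
    abs_sphericalMean_le hτ0 (fun y _ => hMf y)
      fun y hy => image_eq_zero_of_notMem_tsupport fun h => hy (hfsupp h)
  have h2 : |(4 * π)⁻¹ * ∫ ω in sphere 0 1, fderiv ℝ f (x + τ • ω) ω ∂μH[2]| ≤
      L * K / (4 * π * τ ^ 2) := by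
    have := abs_integral_fderiv_unitSphere_le hfsupp hL x hτ0
    rw [abs_mul, abs_inv, abs_of_pos (by positivity)]
    calc (4 * π)⁻¹ * |∫ ω in sphere 0 1, fderiv ℝ f (x + τ • ω) ω ∂μH[2]|
        ≤ (4 * π)⁻¹ * (L * K / τ ^ 2) := by gcongr
      _ = L * K / (4 * π * τ ^ 2) := by field_simp
  have h3 : |sphericalMean g τ x| ≤ Mg * K / (4 * π * τ ^ 2) :=
    abs_sphericalMean_le hτ0 (fun y _ => hMg y)
      fun y hy => image_eq_zero_of_notMem_tsupport fun h => hy (hgsupp h)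
  rw [(hasDerivAt_mul_sphericalMean hf hfc x hτ0).deriv]
  calc _ ≤ |sphericalMean f τ x| +
        τ * |(4 * π)⁻¹ * ∫ ω in sphere 0 1, fderiv ℝ f (x + τ • ω) ω ∂μH[2]| +
        τ * |sphericalMean g τ x| := by
        simpa only [abs_mul, abs_of_pos hτ0] using abs_add_three (sphericalMean f τ x)
          (τ * ((4 * π)⁻¹ * ∫ ω in sphere 0 1, fderiv ℝ f (x + τ • ω) ω ∂μH[2]))
          (τ * sphericalMean g τ x)
    _ ≤ Mf * K / (4 * π * τ ^ 2) + τ * (L * K / (4 * π * τ ^ 2)) +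
        τ * (Mg * K / (4 * π * τ ^ 2)) := by gcongr
    _ = (Mf * K / τ + L * K + Mg * K) / (4 * π * τ) := by field_simp
    _ ≤ (Mf + L + Mg) * K / (4 * π * τ) := by
        rw [add_mul, add_mul]
        gcongr
        exact div_le_self (by positivity) hτ

theorem exists_kirchhoff_decay_conformal {f g : ℝ³ → ℝ} {R : ℝ} (hf : ContDiff ℝ 1 f)
    (hg : Continuous g) (hfsupp : tsupport f ⊆ closedBall 0 R)
    (hgsupp : tsupport g ⊆ closedBall 0 R) :
    ∃ C > 0, ∀ τ : ℝ, 1 ≤ τ → ∀ x,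
      |deriv (fun s => s * sphericalMean f s x) τ + τ * sphericalMean g τ x| ≤ C / τ := by
  have hfc : HasCompactSupport f :=
    (isCompact_closedBall 0 R).of_isClosed_subset (isClosed_tsupport f) hfsupp
  have hgc : HasCompactSupport g :=
    (isCompact_closedBall 0 R).of_isClosed_subset (isClosed_tsupport g) hgsupp
  obtain ⟨Mf, hMf⟩ := hfc.exists_bound_of_continuous hf.continuous
  obtain ⟨L, hL⟩ := (hfc.fderiv ℝ).exists_bound_of_continuous (hf.continuous_fderiv one_ne_zero)
  obtain ⟨Mg, hMg⟩ := hgc.exists_bound_of_continuous hg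
  set C := (Mf + L + Mg) * sphereBallAreaBound R / (4 * π)
  refine ⟨max C 1, by positivity, fun τ hτ x => ?_⟩
  calc _ ≤ C / τ := by
        rw [div_div]
        exact abs_kirchhoff_le hf hfsupp hgsupp hMf hL hMg x hτ
    _ ≤ max C 1 / τ := by gcongr; exact le_max_left C 1

theorem div_rpow_three_mul_le {C t : ℝ} (hC : 0 ≤ C) (ht : 0 < t) :
    C / (3 * t) ^ ((1 : ℝ) / 3) ≤ C * t ^ (-(1 : ℝ) / 3) := by
  rw [neg_div, rpow_neg ht.le, ← div_eq_mul_inv]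
  gcongr
  linarith

theorem kirchhoff_decay_frw_time_general
    (R : ℝ)
    (f g : EuclideanSpace ℝ (Fin 3) → ℝ)
    (hf : ContDiff ℝ 2 f) (hg : ContDiff ℝ 1 g)
    (hfsupp : tsupport f ⊆ closedBall (0 : EuclideanSpace ℝ (Fin 3)) R)
    (hgsupp : tsupport g ⊆ closedBall (0 : EuclideanSpace ℝ (Fin 3)) R)
    (A : ℝ → EuclideanSpace ℝ (Fin 3) → ℝ)
    (hA : ∀ τ : ℝ, 0 < τ → ∀ x, A τ x =
      deriv (fun s => s * sphericalMean f s x) τ + τ * sphericalMean g τ x) :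
    ∃ C > 0, ∀ t : ℝ, 1 ≤ t → ∀ x,
      |A ((3 * t) ^ ((1 : ℝ) / 3)) x| ≤ C * t ^ (-(1 : ℝ) / 3) := by
  obtain ⟨C, hC, hdecay⟩ :=
    exists_kirchhoff_decay_conformal (hf.of_le one_le_two) hg.continuous hfsupp hgsupp
  refine ⟨C, hC, fun t ht x => ?_⟩
  have hτ : 1 ≤ (3 * t) ^ ((1 : ℝ) / 3) := one_le_rpow (by linarith) (by norm_num)
  rw [hA _ (by linarith) x]
  exact (hdecay _ hτ x).trans (div_rpow_three_mul_le hC.le (by linarith))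

/-- In the original FRW time variable `t = τ³/3` (i.e. `τ = (3t)^{1/3}`),
the Kirchhoff spherical-means solution `A(τ,x) = ∂_τ(τ·M_f(τ,x)) + τ·M_g(τ,x)` with data of
class `C² × C¹` supported in `B_R(0)` decays at the rate `O(t^{-1/3})`. -/
theorem kirchhoff_decay_frw_time
    (R : ℝ) (hR : 0 < R)
    (f g : EuclideanSpace ℝ (Fin 3) → ℝ)
    (hf : ContDiff ℝ 2 f) (hg : ContDiff ℝ 1 g)
    (hfsupp : tsupport f ⊆ closedBall (0 : EuclideanSpace ℝ (Fin 3)) R)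
    (hgsupp : tsupport g ⊆ closedBall (0 : EuclideanSpace ℝ (Fin 3)) R)
    (A : ℝ → EuclideanSpace ℝ (Fin 3) → ℝ)
    (hA : ∀ τ : ℝ, 0 < τ → ∀ x, A τ x =
      deriv (fun s => s * sphericalMean f s x) τ + τ * sphericalMean g τ x) :
    ∃ C > 0, ∀ t : ℝ, 1 ≤ t → ∀ x,
      |A ((3 * t) ^ ((1 : ℝ) / 3)) x| ≤ C * t ^ (-(1 : ℝ) / 3) :=
  kirchhoff_decay_frw_time_general R f g hf hg hfsupp hgsupp A hA
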